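/- For τ > 0, a matrix Q ∈ ℝ^{m×n} with SVD Q = U_Q (Σ_{Q1} + Σ_{Q2}) V_Qᵀ, where Σ_{Q1} = diag(σ₁,…,σ_N,0,…,0) contains the leading N singular values and Σ_{Q2} = diag(0,…,0,σ_{N+1},…), the partial singular value thresholding operator P_{N,τ}[Q] = U_Q (Σ_{Q1} + S_τ[Σ_{Q2}]) V_Qᵀ minimizes P ↦ τ‖P‖_{r=N} + (1/2)‖P − Q‖_F², where ‖P‖_{r=N} = Σ_{i>N} σ_i(P) is the sum of singular values of P beyond the N-th. -/

import Mathlib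

/-!
Von Neumann's trace inequality `∑ P a b * Q a b ≤ ∑ σᵢ(P) σᵢ(Q)` gives Mirsky's bound
`∑ (σᵢ(P) - σᵢ(Q))² ≤ ‖P - Q‖_F²`. Hence the objective at any `P` is at least
`∑_{i ≥ N} (τ sᵢ + (sᵢ - qᵢ)² / 2)` with `sᵢ = σᵢ(P) ≥ 0` and `qᵢ = σᵢ(Q)`, and each term is
minimised at `sᵢ = max (qᵢ - τ) 0`. These are the trailing singular values of
`P_{N,τ}[Q] = U (Σ_{Q1} + S_τ[Σ_{Q2}]) Vᵀ`, whose leading ones agree with those of `Q`,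
so at `P_{N,τ}[Q]` the bound is attained.

Von Neumann's inequality is proved by expanding `P` and `Q` along their singular vectors
`uᵢ, vᵢ` and `wⱼ, zⱼ`: by Bessel's inequality the matrices `(uᵢ ⬝ wⱼ)²` and `(vᵢ ⬝ zⱼ)²` are
doubly substochastic, and for such a matrix `C` and antitone nonnegative `a`, `b`,
Abel summation gives `∑ Cᵢⱼ aᵢ bⱼ ≤ ∑ aᵢ bᵢ`.
-/

open Matrix

/-- Squared Frobenius norm. -/
noncomputable def frobSq {m n : ℕ} (A : Matrix (Fin m) (Fin n) ℝ) : ℝ :=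
  ∑ i, ∑ j, (A i j) ^ 2

/-- Unsorted singular values of A: square roots of eigenvalues of AᵀA. -/
noncomputable def svals {m n : ℕ} (A : Matrix (Fin m) (Fin n) ℝ) : Fin n → ℝ :=
  fun i => Real.sqrt ((Matrix.isHermitian_conjTranspose_mul_self A).eigenvalues i)

/-- Singular values of A sorted in nonincreasing order: `svalsDesc A 0` is the
largest singular value. -/
noncomputable def svalsDesc {m n : ℕ} (A : Matrix (Fin m) (Fin n) ℝ) : Fin n → ℝ :=
  fun i => (svals A ∘ Tuple.sort (svals A)) i.rev

/-- Partial sum of singular values beyond the N-th: ‖A‖_{r=N} = Σ_{i>N} σ_i(A)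
(1-based indexing, i.e. 0-based indices i with N ≤ i). -/
noncomputable def partialSumNorm {m n : ℕ} (N : ℕ) (A : Matrix (Fin m) (Fin n) ℝ) : ℝ :=
  ∑ i ∈ Finset.univ.filter (fun i : Fin n => N ≤ (i : ℕ)), svalsDesc A i

/-- Scalar soft-thresholding operator. -/
noncomputable def softThresh (τ σ : ℝ) : ℝ :=
  Real.sign σ * max (|σ| - τ) 0

namespace PSVT

open Finset

section Rearrangement

variable {k : ℕ}

def layer (a : Fin k → ℝ) (t : Fin k) : ℝ :=
  a t - if h : (t : ℕ) + 1 < k then a ⟨t + 1, h⟩ else 0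

lemma layer_nonneg {a : Fin k → ℝ} (ha : Antitone a) (ha0 : ∀ i, 0 ≤ a i) (t : Fin k) :
    0 ≤ layer a t := by
  unfold layer
  split_ifs
  · exact sub_nonneg.mpr (ha (Fin.le_def.mpr (Nat.le_succ _)))
  · simpa using ha0 t

lemma sum_layer (a : Fin k → ℝ) (i : Fin k) :
    ∑ t, (if i ≤ t then layer a t else 0) = a i := by
  set A : ℕ → ℝ := fun n => if h : n < k then a ⟨n, h⟩ else 0
  have hlayer : ∀ t : Fin k, layer a t = -(A (t + 1) - A t) := fun t => by
    simp [layer, A, t.isLt]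
  calc ∑ t : Fin k, (if i ≤ t then layer a t else 0)
      = ∑ t ∈ range k, if (i : ℕ) ≤ t then -(A (t + 1) - A t) else 0 := by
        rw [← Fin.sum_univ_eq_sum_range fun t => if (i : ℕ) ≤ t then -(A (t + 1) - A t) else 0]
        simp only [hlayer, Fin.le_def]
    _ = -(A k - A i) := by
        rw [← sum_filter, range_eq_Ico, Ico_filter_le, max_eq_right (Nat.zero_le _),
          sum_neg_distrib, sum_Ico_sub _ i.isLt.le]
    _ = a i := by simp [A]

lemma eq_sum_layer_smul (a : Fin k → ℝ) :
    a = ∑ t, layer a t • fun i => if i ≤ t then (1 : ℝ) else 0 := by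
  ext i
  simp [Finset.sum_apply, ← sum_layer a i]

/-- Both sides are bilinear in `(a, b)`, and `a`, `b` are nonnegative combinations of the
indicators of initial segments, on which the bound is a count. -/
lemma dotProduct_mulVec_le_of_substochastic {a b : Fin k → ℝ} (ha : Antitone a)
    (hb : Antitone b) (ha0 : ∀ i, 0 ≤ a i) (hb0 : ∀ i, 0 ≤ b i) {C : Matrix (Fin k) (Fin k) ℝ}
    (hC : ∀ i j, 0 ≤ C i j) (hrow : ∀ i, ∑ j, C i j ≤ 1) (hcol : ∀ j, ∑ i, C i j ≤ 1) :
    a ⬝ᵥ (C *ᵥ b) ≤ a ⬝ᵥ b := by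
  set ind : Fin k → Fin k → ℝ := fun t i => if i ≤ t then 1 else 0
  have hind_le : ∀ t u, t ≤ u → ind t ⬝ᵥ ind u = ∑ i with i ≤ t, (1 : ℝ) := by
    intro t u htu
    rw [sum_filter]
    refine sum_congr rfl fun i _ => ?_
    by_cases hi : i ≤ t
    · simp [ind, hi, hi.trans htu]
    · simp [ind, hi]
  have hind : ∀ t u, ind t ⬝ᵥ (C *ᵥ ind u) ≤ ind t ⬝ᵥ ind u := by
    intro t u
    have hlhs : ind t ⬝ᵥ (C *ᵥ ind u) = ∑ i with i ≤ t, ∑ j with j ≤ u, C i j := by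
      simp [ind, dotProduct, mulVec, sum_filter]
    rw [hlhs]
    rcases le_total t u with htu | hut
    · rw [hind_le t u htu]
      gcongr with i
      exact (sum_le_sum_of_subset_of_nonneg (filter_subset _ _)
        fun j _ _ => hC i j).trans (hrow i)
    · rw [dotProduct_comm, hind_le u t hut]
      have hswap : ∑ i with i ≤ t, ∑ j with j ≤ u, C i j
          = ∑ j with j ≤ u, ∑ i with i ≤ t, C i j := sum_comm
      rw [hswap]
      gcongr with j
      exact (sum_le_sum_of_subset_of_nonneg (filter_subset _ _)
        fun i _ _ => hC i j).trans (hcol j)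
  rw [eq_sum_layer_smul a, eq_sum_layer_smul b]
  simp only [mulVec_sum, mulVec_smul, sum_dotProduct, dotProduct_sum, smul_dotProduct,
    dotProduct_smul, smul_eq_mul]
  exact sum_le_sum fun u _ => mul_le_mul_of_nonneg_left (sum_le_sum fun t _ =>
    mul_le_mul_of_nonneg_left (hind t u) (layer_nonneg ha ha0 t)) (layer_nonneg hb hb0 u)

end Rearrangement

def IsSubOrthonormal {ι α : Type*} [Fintype α] (v : ι → α → ℝ) : Prop :=
  Pairwise (fun i j => v i ⬝ᵥ v j = 0) ∧ ∀ i, v i ⬝ᵥ v i ≤ 1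

namespace IsSubOrthonormal

variable {ι α : Type*} [Fintype ι] [Fintype α] {v : ι → α → ℝ}

lemma dotProduct_sum_smul (hv : IsSubOrthonormal v) (c : ι → ℝ) (i : ι) :
    v i ⬝ᵥ ∑ j, c j • v j = c i * (v i ⬝ᵥ v i) := by
  rw [dotProduct_sum, sum_eq_single i (fun j _ hji => by rw [dotProduct_smul, hv.1 hji.symm,
    smul_zero]) (by simp), dotProduct_smul, smul_eq_mul]

lemma sum_sq_dotProduct_le (hv : IsSubOrthonormal v) (x : α → ℝ) :
    ∑ i, (x ⬝ᵥ v i) ^ 2 ≤ x ⬝ᵥ x := by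
  set y := ∑ i, (x ⬝ᵥ v i) • v i
  have hxy : x ⬝ᵥ y = ∑ i, (x ⬝ᵥ v i) ^ 2 := by
    simp [y, dotProduct_sum, sq]
  have hyy : y ⬝ᵥ y ≤ ∑ i, (x ⬝ᵥ v i) ^ 2 := by
    calc y ⬝ᵥ y = ∑ i, (x ⬝ᵥ v i) ^ 2 * (v i ⬝ᵥ v i) := by
          simp only [y, sum_dotProduct, smul_dotProduct, hv.dotProduct_sum_smul, smul_eq_mul]
          exact sum_congr rfl fun i _ => by ring
      _ ≤ ∑ i, (x ⬝ᵥ v i) ^ 2 :=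
          sum_le_sum fun i _ => mul_le_of_le_one_right (sq_nonneg _) (hv.2 i)
  have hnonneg : 0 ≤ (x - y) ⬝ᵥ (x - y) := dotProduct_self_star_nonneg _
  simp only [sub_dotProduct, dotProduct_sub, dotProduct_comm y x] at hnonneg
  linarith

end IsSubOrthonormal

section VonNeumann

variable {k : ℕ} {α β : Type*} [Fintype α] [Fintype β] {s q : Fin k → ℝ}

lemma IsSubOrthonormal.dotProduct_mulVec_sq_le {u w : Fin k → α → ℝ}
    (hu : IsSubOrthonormal u) (hw : IsSubOrthonormal w) (hs : Antitone s) (hq : Antitone q)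
    (hs0 : ∀ i, 0 ≤ s i) (hq0 : ∀ i, 0 ≤ q i) :
    s ⬝ᵥ (of (fun i j => (u i ⬝ᵥ w j) ^ 2) *ᵥ q) ≤ s ⬝ᵥ q :=
  dotProduct_mulVec_le_of_substochastic hs hq hs0 hq0 (fun _ _ => sq_nonneg _)
    (fun i => (hw.sum_sq_dotProduct_le (u i)).trans (hu.2 i))
    (fun j => by
      simpa only [of_apply, dotProduct_comm (u _)] using
        (hu.sum_sq_dotProduct_le (w j)).trans (hw.2 j))

/-- By AM-GM the coefficients are dominated by those of the two doubly substochastic matrices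
`(u i ⬝ᵥ w j) ^ 2` and `(v i ⬝ᵥ z j) ^ 2`. -/
lemma sum_sum_mul_dotProduct_mul_dotProduct_le {u w : Fin k → α → ℝ} {v z : Fin k → β → ℝ}
    (hu : IsSubOrthonormal u) (hw : IsSubOrthonormal w)
    (hv : IsSubOrthonormal v) (hz : IsSubOrthonormal z)
    (hs : Antitone s) (hq : Antitone q) (hs0 : ∀ i, 0 ≤ s i) (hq0 : ∀ i, 0 ≤ q i) :
    ∑ i, ∑ j, s i * q j * ((u i ⬝ᵥ w j) * (v i ⬝ᵥ z j)) ≤ s ⬝ᵥ q := by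
  have huw := hu.dotProduct_mulVec_sq_le hw hs hq hs0 hq0
  have hvz := hv.dotProduct_mulVec_sq_le hz hs hq hs0 hq0
  calc ∑ i, ∑ j, s i * q j * ((u i ⬝ᵥ w j) * (v i ⬝ᵥ z j))
      ≤ ∑ i, ∑ j, s i * q j * (((u i ⬝ᵥ w j) ^ 2 + (v i ⬝ᵥ z j) ^ 2) / 2) := by
        gcongr with i _ j _
        · exact mul_nonneg (hs0 i) (hq0 j)
        · nlinarith [sq_nonneg ((u i ⬝ᵥ w j) - (v i ⬝ᵥ z j))]
    _ = (s ⬝ᵥ (of (fun i j => (u i ⬝ᵥ w j) ^ 2) *ᵥ q)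
          + s ⬝ᵥ (of (fun i j => (v i ⬝ᵥ z j) ^ 2) *ᵥ q)) / 2 := by
        simp only [dotProduct, mulVec, of_apply, mul_sum, ← sum_add_distrib, sum_div]
        exact sum_congr rfl fun i _ => sum_congr rfl fun j _ => by ring
    _ ≤ s ⬝ᵥ q := by linarith

end VonNeumann

section Expansion

variable {ι α β : Type*} [Fintype ι] [Fintype α] [Fintype β]

lemma mulVec_dotProduct_mulVec (P : Matrix α β ℝ) (x y : β → ℝ) :
    (P *ᵥ x) ⬝ᵥ (P *ᵥ y) = x ⬝ᵥ (Pᵀ *ᵥ (P *ᵥ y)) := by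
  rw [dotProduct_mulVec x Pᵀ, vecMul_transpose]

/-- The left factors are `(s i)⁻¹ • P *ᵥ v i`; where `s i = 0` this junk value is harmless,
since then `P *ᵥ v i = 0`. -/
lemma exists_eq_sum_smul_vecMulVec (P : Matrix α β ℝ) {v : ι → β → ℝ}
    (hv : IsSubOrthonormal v) (hv_sum : ∀ x, ∑ i, (x ⬝ᵥ v i) • v i = x) {s : ι → ℝ}
    (heig : ∀ i, Pᵀ *ᵥ (P *ᵥ v i) = s i ^ 2 • v i) :
    ∃ u : ι → α → ℝ, IsSubOrthonormal u ∧ P = ∑ i, s i • vecMulVec (u i) (v i) := by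
  have hgram : ∀ i j, (P *ᵥ v i) ⬝ᵥ (P *ᵥ v j) = s j ^ 2 * (v i ⬝ᵥ v j) := fun i j => by
    rw [mulVec_dotProduct_mulVec, heig, dotProduct_smul, smul_eq_mul]
  have hker : ∀ i, s i = 0 → P *ᵥ v i = 0 := fun i hi =>
    dotProduct_self_eq_zero.mp (by rw [hgram, hi]; ring)
  have hsu : ∀ i, s i • (s i)⁻¹ • P *ᵥ v i = P *ᵥ v i := fun i => by
    rcases eq_or_ne (s i) 0 with hi | hi
    · simp [hi, hker i hi]
    · rw [smul_inv_smul₀ hi]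
  refine ⟨fun i => (s i)⁻¹ • P *ᵥ v i, ⟨fun i j hij => ?_, fun i => ?_⟩, ?_⟩
  · simp [dotProduct_smul, smul_dotProduct, hgram, hv.1 hij]
  · rw [smul_dotProduct, dotProduct_smul, hgram, smul_eq_mul, smul_eq_mul]
    rcases eq_or_ne (s i) 0 with hi | hi
    · simp [hi]
    · rw [show (s i)⁻¹ * ((s i)⁻¹ * (s i ^ 2 * (v i ⬝ᵥ v i))) = v i ⬝ᵥ v i by field_simp]
      exact hv.2 i
  · ext a b
    have hrow := congrFun (hv_sum (P a)) b
    simp only [Finset.sum_apply, Pi.smul_apply, smul_eq_mul] at hrow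
    simp only [Matrix.sum_apply, Matrix.smul_apply, vecMulVec_apply, smul_eq_mul]
    rw [← hrow]
    refine sum_congr rfl fun i _ => ?_
    rw [← mul_assoc]
    exact congrArg (· * v i b) (congrFun (hsu i) a).symm

lemma svalsDesc_nonneg {m n : ℕ} (P : Matrix (Fin m) (Fin n) ℝ) (i : Fin n) : 0 ≤ svalsDesc P i :=
  Real.sqrt_nonneg _

lemma svalsDesc_antitone {m n : ℕ} (P : Matrix (Fin m) (Fin n) ℝ) : Antitone (svalsDesc P) :=
  fun _ _ h => Tuple.monotone_sort _ (Fin.rev_le_rev.mpr h)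

lemma svalsDesc_sq {m n : ℕ} (P : Matrix (Fin m) (Fin n) ℝ) (i : Fin n) :
    svalsDesc P i ^ 2 = (isHermitian_conjTranspose_mul_self P).eigenvalues
      ((Fin.revPerm.trans (Tuple.sort (svals P))) i) :=
  Real.sq_sqrt ((posSemidef_conjTranspose_mul_self P).eigenvalues_nonneg _)

lemma exists_eq_sum_svalsDesc_smul_vecMulVec {m n : ℕ} (P : Matrix (Fin m) (Fin n) ℝ) :
    ∃ (u : Fin n → Fin m → ℝ) (v : Fin n → Fin n → ℝ), IsSubOrthonormal u ∧
      IsSubOrthonormal v ∧ P = ∑ i, svalsDesc P i • vecMulVec (u i) (v i) := by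
  set hH := isHermitian_conjTranspose_mul_self P
  set π : Fin n ≃ Fin n := Fin.revPerm.trans (Tuple.sort (svals P))
  set b := hH.eigenvectorBasis.reindex π.symm
  have hdot : ∀ i j, ⇑(b i) ⬝ᵥ ⇑(b j) = if i = j then 1 else 0 := fun i j => by
    rw [← orthonormal_iff_ite.mp b.orthonormal i j, EuclideanSpace.inner_eq_star_dotProduct,
      dotProduct_comm]
    rfl
  have hv : IsSubOrthonormal fun i => ⇑(b i) :=
    ⟨fun i j hij => by simp [hdot, hij], fun i => by simp [hdot]⟩
  have hv_sum : ∀ x : Fin n → ℝ, ∑ i, (x ⬝ᵥ b i) • ⇑(b i) = x := fun x => by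
    have h := congrArg WithLp.ofLp (b.sum_repr' (WithLp.toLp 2 x))
    simp only [WithLp.ofLp_sum, WithLp.ofLp_smul, EuclideanSpace.inner_eq_star_dotProduct] at h
    simpa using h
  have heig : ∀ i, Pᵀ *ᵥ (P *ᵥ b i) = svalsDesc P i ^ 2 • ⇑(b i) := fun i => by
    rw [mulVec_mulVec, ← conjTranspose_eq_transpose_of_trivial, svalsDesc_sq,
      OrthonormalBasis.reindex_apply, Equiv.symm_symm]
    exact hH.mulVec_eigenvectorBasis (π i)
  obtain ⟨u, hu, hP⟩ := exists_eq_sum_smul_vecMulVec P hv hv_sum heig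
  exact ⟨u, _, hu, hv, hP⟩

end Expansion

section Frobenius

variable {m n : ℕ}

lemma frobSq_eq_trace (A : Matrix (Fin m) (Fin n) ℝ) : frobSq A = trace (Aᵀ * A) := by
  rw [frobSq, sum_comm]
  simp [trace, mul_apply, sq]

lemma frobSq_eq_sum_svalsDesc_sq (P : Matrix (Fin m) (Fin n) ℝ) :
    frobSq P = ∑ i, svalsDesc P i ^ 2 := by
  rw [frobSq_eq_trace, ← conjTranspose_eq_transpose_of_trivial,
    (isHermitian_conjTranspose_mul_self P).trace_eq_sum_eigenvalues]
  simp only [svalsDesc_sq, RCLike.ofReal_real_eq_id, id]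
  exact (Equiv.sum_comp _ _).symm

lemma frobSq_sub (P Q : Matrix (Fin m) (Fin n) ℝ) :
    frobSq (P - Q) = frobSq P - 2 * ∑ a, ∑ b, P a b * Q a b + frobSq Q := by
  simp only [frobSq, Matrix.sub_apply, mul_sum, ← sum_sub_distrib, ← sum_add_distrib]
  exact sum_congr rfl fun a _ => sum_congr rfl fun b _ => by ring

lemma sum_sum_mul_eq_of_eq_sum_smul_vecMulVec {k : ℕ} {P Q : Matrix (Fin m) (Fin n) ℝ}
    {s q : Fin k → ℝ} {u w : Fin k → Fin m → ℝ} {v z : Fin k → Fin n → ℝ}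
    (hP : P = ∑ i, s i • vecMulVec (u i) (v i)) (hQ : Q = ∑ j, q j • vecMulVec (w j) (z j)) :
    ∑ a, ∑ b, P a b * Q a b = ∑ i, ∑ j, s i * q j * ((u i ⬝ᵥ w j) * (v i ⬝ᵥ z j)) := by
  have hentry : ∀ a b, P a b * Q a b
      = ∑ i, ∑ j, s i * q j * ((u i a * w j a) * (v i b * z j b)) := fun a b => by
    simp only [hP, hQ, Matrix.sum_apply, Matrix.smul_apply, vecMulVec_apply, smul_eq_mul,
      sum_mul_sum]
    exact sum_congr rfl fun i _ => sum_congr rfl fun j _ => by ring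
  simp only [hentry]
  simp_rw [sum_comm (γ := Fin m), sum_comm (γ := Fin n)]
  refine sum_congr rfl fun i _ => sum_congr rfl fun j _ => ?_
  rw [dotProduct, dotProduct, sum_mul_sum]
  simp only [mul_sum]

lemma sum_sum_mul_le_sum_svalsDesc_mul (P Q : Matrix (Fin m) (Fin n) ℝ) :
    ∑ a, ∑ b, P a b * Q a b ≤ ∑ i, svalsDesc P i * svalsDesc Q i := by
  obtain ⟨u, v, hu, hv, hP⟩ := exists_eq_sum_svalsDesc_smul_vecMulVec P
  obtain ⟨w, z, hw, hz, hQ⟩ := exists_eq_sum_svalsDesc_smul_vecMulVec Q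
  rw [sum_sum_mul_eq_of_eq_sum_smul_vecMulVec hP hQ]
  exact sum_sum_mul_dotProduct_mul_dotProduct_le hu hw hv hz (svalsDesc_antitone P)
    (svalsDesc_antitone Q) (svalsDesc_nonneg P) (svalsDesc_nonneg Q)

lemma sum_sq_sub_svalsDesc_le_frobSq (P Q : Matrix (Fin m) (Fin n) ℝ) :
    ∑ i, (svalsDesc P i - svalsDesc Q i) ^ 2 ≤ frobSq (P - Q) := by
  have hvN := sum_sum_mul_le_sum_svalsDesc_mul P Q
  have hexp : ∑ i, (svalsDesc P i - svalsDesc Q i) ^ 2 = ∑ i, svalsDesc P i ^ 2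
      - 2 * ∑ i, svalsDesc P i * svalsDesc Q i + ∑ i, svalsDesc Q i ^ 2 := by
    simp only [sub_sq, sum_add_distrib, sum_sub_distrib, mul_sum, mul_assoc]
  rw [hexp, frobSq_sub, frobSq_eq_sum_svalsDesc_sq P, frobSq_eq_sum_svalsDesc_sq Q]
  linarith

end Frobenius

section SingularValuesOfGram

open Polynomial

variable {m n : ℕ}

lemma map_eigenvalues_eq_of_eq_mul_diagonal_mul_transpose {ι : Type*} [Fintype ι]
    [DecidableEq ι] {A : Matrix ι ι ℝ} (hA : A.IsHermitian) {W : Matrix ι ι ℝ}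
    (hW : Wᵀ * W = 1) {d : ι → ℝ}
    (h : A = W * diagonal d * Wᵀ) :
    univ.val.map hA.eigenvalues = univ.val.map d := by
  have hchar : A.charpoly = ∏ i, (X - C (d i)) := by
    rw [h, mul_assoc, charpoly_mul_comm, mul_assoc, hW, mul_one, charpoly_diagonal]
  calc univ.val.map hA.eigenvalues = A.charpoly.roots := by
        simp [hA.roots_charpoly_eq_eigenvalues]
    _ = ((univ.val.map d).map fun a => X - C a).prod.roots := by
        rw [hchar, prod_eq_multiset_prod, Multiset.map_map]; rfl
    _ = univ.val.map d := roots_multiset_prod_X_sub_C _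

lemma apply_sort_rev_eq_of_map_eq {k : ℕ} {f g : Fin k → ℝ} (h : univ.val.map f = univ.val.map g)
    (hg : Antitone g) (i : Fin k) : f (Tuple.sort f i.rev) = g i := by
  set F : Fin k → ℝ := fun i => f (Tuple.sort f i.rev)
  have hF : Antitone F := fun i j hij => Tuple.monotone_sort f (Fin.rev_le_rev.mpr hij)
  have hmap : univ.val.map F = univ.val.map g := by
    rw [← h, show F = f ∘ (Fin.revPerm.trans (Tuple.sort f)) from rfl, ← Multiset.map_map,
      Multiset.map_univ_val_equiv]
  have hlist : List.ofFn F = List.ofFn g :=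
    List.Perm.eq_of_sortedGE hF.sortedGE_ofFn hg.sortedGE_ofFn
      (Multiset.coe_eq_coe.mp (by simpa only [Fin.univ_val_map] using hmap))
  exact congrFun (List.ofFn_inj.mp hlist) i

lemma svalsDesc_eq_of_transpose_mul_self_eq {A : Matrix (Fin m) (Fin n) ℝ}
    {W : Matrix (Fin n) (Fin n) ℝ} (hW : Wᵀ * W = 1) {g : Fin n → ℝ} (hg : Antitone g)
    (hg0 : ∀ i, 0 ≤ g i) (h : Aᵀ * A = W * diagonal (fun i => g i ^ 2) * Wᵀ) :
    svalsDesc A = g := by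
  funext i
  have hmap := map_eigenvalues_eq_of_eq_mul_diagonal_mul_transpose
    (isHermitian_conjTranspose_mul_self A) hW (by rwa [conjTranspose_eq_transpose_of_trivial])
  refine apply_sort_rev_eq_of_map_eq ?_ hg i
  calc univ.val.map (svals A)
      = (univ.val.map (isHermitian_conjTranspose_mul_self A).eigenvalues).map Real.sqrt := by
        rw [Multiset.map_map]; rfl
    _ = univ.val.map g := by
        rw [hmap, Multiset.map_map]
        exact Multiset.map_congr rfl fun i _ => Real.sqrt_sq (hg0 i)

end SingularValuesOfGram

section RectDiag

variable {m n : ℕ}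

def rectDiag (m : ℕ) (d : Fin n → ℝ) : Matrix (Fin m) (Fin n) ℝ :=
  of fun i j => if (i : ℕ) = j then d j else 0

def truncDiag (m : ℕ) (d : Fin n → ℝ) : Fin n → ℝ :=
  fun j => if (j : ℕ) < m then d j else 0

lemma sum_ite_val_eq (c : ℕ) (f : Fin m → ℝ) :
    ∑ a : Fin m, (if (a : ℕ) = c then f a else 0) = if h : c < m then f ⟨c, h⟩ else 0 := by
  split_ifs with h
  · rw [sum_eq_single ⟨c, h⟩ (fun a _ ha => if_neg fun hac => ha (Fin.ext hac)) (by simp)]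
    simp
  · exact sum_eq_zero fun a _ => if_neg fun (hac : (a : ℕ) = c) => h (hac ▸ a.isLt)

lemma transpose_rectDiag_mul_rectDiag (d : Fin n → ℝ) :
    (rectDiag m d)ᵀ * rectDiag m d = diagonal fun j => truncDiag m d j ^ 2 := by
  ext c e
  simp only [rectDiag, mul_apply, transpose_apply, of_apply, diagonal_apply, truncDiag]
  have hterm : ∀ a : Fin m,
      (if (a : ℕ) = c then d c else 0) * (if (a : ℕ) = e then d e else 0)
        = if (a : ℕ) = c then (if c = e then d c ^ 2 else 0) else 0 := fun a => by
    by_cases hac : (a : ℕ) = c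
    · by_cases hce : c = e
      · simp [hac, hce, sq]
      · simp [hac, hce, Fin.val_inj]
    · simp [hac]
  rw [sum_congr rfl fun a _ => hterm a, sum_ite_val_eq]
  split_ifs <;> simp

lemma frobSq_rectDiag (d : Fin n → ℝ) : frobSq (rectDiag m d) = ∑ j, truncDiag m d j ^ 2 := by
  rw [frobSq_eq_trace, transpose_rectDiag_mul_rectDiag, trace_diagonal]

lemma rectDiag_sub (d e : Fin n → ℝ) : rectDiag m d - rectDiag m e = rectDiag m (d - e) := by
  ext i j
  simp only [rectDiag, Matrix.sub_apply, of_apply, Pi.sub_apply]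
  split_ifs <;> simp

lemma truncDiag_sub (d e : Fin n → ℝ) :
    truncDiag m (d - e) = truncDiag m d - truncDiag m e := by
  ext j
  simp only [truncDiag, Pi.sub_apply]
  split_ifs <;> simp

lemma truncDiag_nonneg {d : Fin n → ℝ} (hd0 : ∀ j, 0 ≤ d j) (j : Fin n) :
    0 ≤ truncDiag m d j := by
  unfold truncDiag
  split_ifs
  exacts [hd0 j, le_rfl]

lemma truncDiag_antitone {d : Fin n → ℝ} (hd : Antitone d) (hd0 : ∀ j, 0 ≤ d j) :
    Antitone (truncDiag m d) := fun i j hij => by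
  unfold truncDiag
  split_ifs with hj hi hi
  · exact hd hij
  · exact absurd (lt_of_le_of_lt (Fin.le_def.mp hij) hj) hi
  · exact hd0 i
  · exact le_rfl

end RectDiag

section OrthogonalInvariance

variable {m n : ℕ} {U : Matrix (Fin m) (Fin m) ℝ} {V : Matrix (Fin n) (Fin n) ℝ}

lemma transpose_mul_self_mul_mul_transpose (hU : Uᵀ * U = 1)
    (A : Matrix (Fin m) (Fin n) ℝ) :
    (U * A * Vᵀ)ᵀ * (U * A * Vᵀ) = V * (Aᵀ * A) * Vᵀ := by
  simp only [transpose_mul, transpose_transpose, Matrix.mul_assoc]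
  rw [← Matrix.mul_assoc Uᵀ, hU, Matrix.one_mul]

lemma frobSq_mul_mul_transpose (hU : Uᵀ * U = 1) (hV : Vᵀ * V = 1)
    (A : Matrix (Fin m) (Fin n) ℝ) : frobSq (U * A * Vᵀ) = frobSq A := by
  rw [frobSq_eq_trace, frobSq_eq_trace, transpose_mul_self_mul_mul_transpose hU,
    trace_mul_comm, ← Matrix.mul_assoc, hV, Matrix.one_mul]

lemma svalsDesc_mul_rectDiag_mul_transpose (hU : Uᵀ * U = 1) (hV : Vᵀ * V = 1)
    {d : Fin n → ℝ} (hd : Antitone d) (hd0 : ∀ j, 0 ≤ d j) :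
    svalsDesc (U * rectDiag m d * Vᵀ) = truncDiag m d :=
  svalsDesc_eq_of_transpose_mul_self_eq hV (truncDiag_antitone hd hd0) (truncDiag_nonneg hd0)
    (by rw [transpose_mul_self_mul_mul_transpose hU, transpose_rectDiag_mul_rectDiag])

end OrthogonalInvariance

section Thresholding

variable {n : ℕ}

lemma softThresh_zero (τ : ℝ) : softThresh τ 0 = 0 := by
  simp [softThresh]

lemma softThresh_of_nonneg {τ x : ℝ} (hτ : 0 ≤ τ) (hx : 0 ≤ x) :
    softThresh τ x = max (x - τ) 0 := by
  rcases hx.lt_or_eq with hx | rfl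
  · simp [softThresh, Real.sign_of_pos hx, abs_of_pos hx]
  · simp [softThresh, hτ]

lemma mul_max_sub_add_sq_le (τ q : ℝ) {s : ℝ} (hs : 0 ≤ s) :
    τ * max (q - τ) 0 + 1 / 2 * (max (q - τ) 0 - q) ^ 2 ≤ τ * s + 1 / 2 * (s - q) ^ 2 := by
  rcases le_total q τ with hq | hq
  · rw [max_eq_right (by linarith)]
    nlinarith [mul_nonneg hs (sub_nonneg.mpr hq)]
  · rw [max_eq_left (by linarith)]
    nlinarith [sq_nonneg (s - q + τ)]

/-- The diagonal of `Σ_{Q1} + S_τ[Σ_{Q2}]`. -/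
noncomputable def partialThresh (N : ℕ) (τ : ℝ) (σ : Fin n → ℝ) : Fin n → ℝ :=
  fun j => if (j : ℕ) < N then σ j else softThresh τ (σ j)

variable {N : ℕ} {τ : ℝ} {σ : Fin n → ℝ}

lemma partialThresh_of_le (hτ : 0 ≤ τ) (hσ0 : ∀ j, 0 ≤ σ j) {j : Fin n}
    (hj : N ≤ (j : ℕ)) :
    partialThresh N τ σ j = max (σ j - τ) 0 := by
  rw [partialThresh, if_neg (not_lt.mpr hj), softThresh_of_nonneg hτ (hσ0 j)]

lemma partialThresh_nonneg (hτ : 0 ≤ τ) (hσ0 : ∀ j, 0 ≤ σ j) (j : Fin n) :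
    0 ≤ partialThresh N τ σ j := by
  rcases lt_or_ge (j : ℕ) N with hj | hj
  · rw [partialThresh, if_pos hj]; exact hσ0 j
  · rw [partialThresh_of_le hτ hσ0 hj]; exact le_max_right _ _

lemma partialThresh_antitone (hτ : 0 ≤ τ) (hσ : Antitone σ) (hσ0 : ∀ j, 0 ≤ σ j) :
    Antitone (partialThresh N τ σ) := fun i j hij => by
  have hij' : (i : ℕ) ≤ j := hij
  rcases lt_or_ge (j : ℕ) N with hj | hj
  · rw [partialThresh, partialThresh, if_pos hj, if_pos (lt_of_le_of_lt hij' hj)]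
    exact hσ hij
  rw [partialThresh_of_le hτ hσ0 hj]
  rcases lt_or_ge (i : ℕ) N with hi | hi
  · rw [partialThresh, if_pos hi]
    exact max_le (by linarith [hσ hij]) (hσ0 i)
  · rw [partialThresh_of_le hτ hσ0 hi]
    exact max_le_max (by linarith [hσ hij]) le_rfl

lemma truncDiag_partialThresh_of_lt {m : ℕ} {j : Fin n} (hj : (j : ℕ) < N) :
    truncDiag m (partialThresh N τ σ) j = truncDiag m σ j := by
  simp [truncDiag, partialThresh, hj]

lemma truncDiag_partialThresh_of_le {m : ℕ} (hτ : 0 ≤ τ) (hσ0 : ∀ j, 0 ≤ σ j) {j : Fin n}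
    (hj : N ≤ (j : ℕ)) :
    truncDiag m (partialThresh N τ σ) j = max (truncDiag m σ j - τ) 0 := by
  unfold truncDiag
  split_ifs
  · exact partialThresh_of_le hτ hσ0 hj
  · simp [hτ]

end Thresholding

section Minimizer

variable {m n : ℕ}

lemma sum_le_partialSumNorm_add_frobSq {N : ℕ} {τ : ℝ} (P Q : Matrix (Fin m) (Fin n) ℝ)
    {d : Fin n → ℝ} (hd : ∀ i : Fin n, N ≤ (i : ℕ) → d i = max (svalsDesc Q i - τ) 0) :
    ∑ i with N ≤ i.val, (τ * d i + 1 / 2 * (d i - svalsDesc Q i) ^ 2) ≤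
      τ * partialSumNorm N P + 1 / 2 * frobSq (P - Q) := by
  calc ∑ i with N ≤ i.val, (τ * d i + 1 / 2 * (d i - svalsDesc Q i) ^ 2)
      ≤ ∑ i with N ≤ i.val,
          (τ * svalsDesc P i + 1 / 2 * (svalsDesc P i - svalsDesc Q i) ^ 2) :=
        sum_le_sum fun i hi => by
          rw [hd i (mem_filter.mp hi).2]
          exact mul_max_sub_add_sq_le τ _ (svalsDesc_nonneg P i)
    _ ≤ τ * partialSumNorm N P + 1 / 2 * ∑ i, (svalsDesc P i - svalsDesc Q i) ^ 2 := by
        rw [sum_add_distrib, ← mul_sum, ← mul_sum, partialSumNorm]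
        gcongr
        exact filter_subset _ _
    _ ≤ τ * partialSumNorm N P + 1 / 2 * frobSq (P - Q) := by
        gcongr
        exact sum_sq_sub_svalsDesc_le_frobSq P Q

variable {N : ℕ} {τ : ℝ} {σ : Fin n → ℝ}

lemma lead_add_tail_eq_rectDiag :
    ((of fun (i : Fin m) (j : Fin n) => if (i : ℕ) = (j : ℕ) ∧ (j : ℕ) < N then σ j else 0) +
      of fun (i : Fin m) (j : Fin n) => if (i : ℕ) = (j : ℕ) ∧ N ≤ (j : ℕ) then σ j else 0) =
      rectDiag m σ := by
  ext i j
  simp only [rectDiag, Matrix.add_apply, of_apply]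
  split_ifs <;> first | omega | simp

lemma lead_add_softThresh_tail_eq_rectDiag :
    ((of fun (i : Fin m) (j : Fin n) => if (i : ℕ) = (j : ℕ) ∧ (j : ℕ) < N then σ j else 0) +
      of fun i j => softThresh τ
        ((of fun (i : Fin m) (j : Fin n) => if (i : ℕ) = (j : ℕ) ∧ N ≤ (j : ℕ) then σ j else 0)
          i j)) =
      rectDiag m (partialThresh N τ σ) := by
  ext i j
  simp only [rectDiag, partialThresh, Matrix.add_apply, of_apply]
  split_ifs <;> first | omega | simp [softThresh_zero]

lemma frobSq_mul_rectDiag_partialThresh_sub {U : Matrix (Fin m) (Fin m) ℝ}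
    {V : Matrix (Fin n) (Fin n) ℝ} (hU : Uᵀ * U = 1) (hV : Vᵀ * V = 1) :
    frobSq (U * rectDiag m (partialThresh N τ σ) * Vᵀ - U * rectDiag m σ * Vᵀ) =
      ∑ i with N ≤ i.val, (truncDiag m (partialThresh N τ σ) i - truncDiag m σ i) ^ 2 := by
  rw [← Matrix.sub_mul, ← Matrix.mul_sub, rectDiag_sub, frobSq_mul_mul_transpose hU hV,
    frobSq_rectDiag, truncDiag_sub]
  refine (sum_filter_of_ne fun i _ hi => ?_).symm
  by_contra hiN
  rw [Pi.sub_apply, truncDiag_partialThresh_of_lt (not_le.mp hiN), sub_self] at hi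
  exact hi (zero_pow two_ne_zero)

end Minimizer

end PSVT

open PSVT Finset

/-- Partial singular value thresholding (Oh et al.): given an SVD
Q = U (Σ₁ + Σ₂) Vᵀ where Σ₁ carries the leading N singular values and Σ₂ the
rest (singular values sorted nonincreasingly), the matrix
P_{N,τ}[Q] = U (Σ₁ + S_τ[Σ₂]) Vᵀ minimizes
P ↦ τ‖P‖_{r=N} + (1/2)‖P − Q‖_F². -/
theorem stmt_3 (m n N : ℕ) (τ : ℝ) (hτ : 0 < τ)
    (σ : Fin n → ℝ) (hσ : Antitone σ) (hσ0 : ∀ j, 0 ≤ σ j)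
    (Q : Matrix (Fin m) (Fin n) ℝ)
    (U : Matrix (Fin m) (Fin m) ℝ) (V : Matrix (Fin n) (Fin n) ℝ)
    (hU : Uᵀ * U = 1) (hV : Vᵀ * V = 1)
    (Sig1 Sig2 : Matrix (Fin m) (Fin n) ℝ)
    (hSig1 : Sig1 = Matrix.of fun (i : Fin m) (j : Fin n) =>
      if (i : ℕ) = (j : ℕ) ∧ (j : ℕ) < N then σ j else 0)
    (hSig2 : Sig2 = Matrix.of fun (i : Fin m) (j : Fin n) =>
      if (i : ℕ) = (j : ℕ) ∧ N ≤ (j : ℕ) then σ j else 0)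
    (hQ : Q = U * (Sig1 + Sig2) * Vᵀ) :
    ∀ P : Matrix (Fin m) (Fin n) ℝ,
      τ * partialSumNorm N
          (U * (Sig1 + Matrix.of fun i j => softThresh τ (Sig2 i j)) * Vᵀ) +
        (1 / 2) * frobSq
          (U * (Sig1 + Matrix.of fun i j => softThresh τ (Sig2 i j)) * Vᵀ - Q) ≤
      τ * partialSumNorm N P + (1 / 2) * frobSq (P - Q) := by
  intro P
  subst hSig1 hSig2
  rw [lead_add_tail_eq_rectDiag] at hQ
  rw [lead_add_softThresh_tail_eq_rectDiag]
  have hsvQ : svalsDesc Q = truncDiag m σ :=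
    hQ ▸ svalsDesc_mul_rectDiag_mul_transpose hU hV hσ hσ0
  have hsvP := svalsDesc_mul_rectDiag_mul_transpose (m := m) hU hV
    (partialThresh_antitone hτ.le hσ hσ0) (partialThresh_nonneg (N := N) hτ.le hσ0)
  calc _ = ∑ i with N ≤ i.val, (τ * truncDiag m (partialThresh N τ σ) i
        + 1 / 2 * (truncDiag m (partialThresh N τ σ) i - svalsDesc Q i) ^ 2) := by
        rw [partialSumNorm, hsvP, hsvQ, hQ, frobSq_mul_rectDiag_partialThresh_sub hU hV,
          sum_add_distrib, mul_sum, mul_sum]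
    _ ≤ _ := sum_le_partialSumNorm_add_frobSq P Q fun i hi => by
        rw [hsvQ, truncDiag_partialThresh_of_le hτ.le hσ0 hi]
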